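/- Let M̂ be the matroid union constructed from a rank-r matroid M on E ({1,…,r} a basis) with auxiliary parallel/loop sets A and B as in the Brylawski–Ziegler construction. Let X be a cocircuit of M̂ with X ∩ B = ∅. Then for every a ∈ A and e ∈ {1,…,r} with a parallel to e in M₁: a ∈ X if and only if e ∈ X. -/

import Mathlib

/-!
Let `x ∈ X` be one of `i`, `n+i` and `y` the other. Minimality of `X` gives a base
`I₁ ∪ I₂` of `M̂` meeting `X` only in `x`. Exchanging `x` for its parallel partner `y` in `I₁`,
and, where `I₂` is in the way, exchanging an element of `I₂` for one of `B`, produces another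
base of `M̂`; this works because `B` consists of loops of `M₁` and spans `{1,…,n}` in `M₂`
(it is parallel to `E₂`, a base of `M✶`). The new base adds to `(I₁ ∪ I₂) \ {x}` either `y`
or an element of `B`, yet it must meet `X`, so `y ∈ X`.
-/

open Set Matroid
namespace NL
variable {γ : Type*}

/-- Rank of a set in a matroid: the max size of an independent subset. -/
noncomputable def rk (M : Matroid γ) (X : Set γ) : ℕ :=
  sSup {n | ∃ I, M.Indep I ∧ I ⊆ X ∧ I.ncard = n}

/-- A cocircuit: a minimal set meeting every base. -/
def Cocircuit (M : Matroid γ) (D : Set γ) : Prop :=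
  D ⊆ M.E ∧ (∀ B, M.IsBase B → (D ∩ B).Nonempty) ∧
    ∀ D' ⊂ D, ∃ B, M.IsBase B ∧ D' ∩ B = ∅

/-- A loop: an element contained in no independent set. -/
def MLoop (M : Matroid γ) (e : γ) : Prop := e ∈ M.E ∧ ¬ M.Indep {e}

/-- Parallel elements: distinct non-loops forming a dependent pair. -/
def MParallel (M : Matroid γ) (e f : γ) : Prop :=
  e ≠ f ∧ M.Indep {e} ∧ M.Indep {f} ∧ ¬ M.Indep {e, f}

/-- Deletion of the set `X`. -/
noncomputable def mdelete (M : Matroid γ) (X : Set γ) : Matroid γ := M ↾ (M.E \ X)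

/-- Contraction of the set `X`, defined by duality. -/
noncomputable def mcontract (M : Matroid γ) (X : Set γ) : Matroid γ := (M✶ ↾ (M✶.E \ X))✶

/-- `X` is a union of cocircuits of `M` (equivalently, the complement of a flat). -/
def UnionOfCocircuits (M : Matroid γ) (X : Set γ) : Prop :=
  ∃ S : Set (Set γ), (∀ D ∈ S, Cocircuit M D) ∧ X = ⋃₀ S

/-- The rank of `X` in the lattice of unions of cocircuits of `M` ordered by
inclusion: the maximal length of a chain from `∅` to `X` in this lattice. -/
noncomputable def latticeRk (M : Matroid γ) (X : Set γ) : ℕ :=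
  sSup {k | ∃ c : Fin (k+1) → Set γ, StrictMono c ∧ (∀ i, UnionOfCocircuits M (c i)) ∧
    c 0 = ∅ ∧ c (Fin.last k) = X}

lemma MParallel.symm {M : Matroid γ} {e f : γ} (h : MParallel M e f) : MParallel M f e :=
  ⟨h.1.symm, h.2.2.1, h.2.1, by rw [Set.pair_comm]; exact h.2.2.2⟩

lemma MParallel.mem_closure {M : Matroid γ} {e f : γ} (h : MParallel M e f) :
    f ∈ M.closure {e} := by
  rw [h.2.1.mem_closure_iff_of_notMem (by simpa using h.1.symm), Set.pair_comm]
  exact ⟨h.2.2.2, insert_subset (h.2.1.subset_ground (mem_singleton e)) h.2.2.1.subset_ground⟩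

lemma MParallel.notMem_of_indep {M : Matroid γ} {e f : γ} {I : Set γ} (h : MParallel M e f)
    (hI : M.Indep I) (he : e ∈ I) : f ∉ I :=
  fun hf ↦ h.2.2.2 (hI.subset (insert_subset he (singleton_subset_iff.2 hf)))

lemma MParallel.indep_insert_sdiff {M : Matroid γ} {e f : γ} {I : Set γ} (h : MParallel M e f)
    (hI : M.Indep I) (he : e ∈ I) : M.Indep (insert f (I \ {e})) := by
  have hJ : M.Indep (I \ {e}) := hI.subset sdiff_subset
  rw [hJ.insert_indep_iff_of_notMem fun hf ↦ h.notMem_of_indep hI he hf.1]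
  refine ⟨h.2.2.1.subset_ground (mem_singleton f), fun hf ↦ hI.notMem_closure_sdiff_of_mem he ?_⟩
  exact M.closure_subset_closure_of_subset_closure (singleton_subset_iff.2 hf) h.symm.mem_closure

lemma _root_.Matroid.Indep.exists_insert_sdiff_indep_of_mem_closure {M : Matroid γ}
    {I S : Set γ} {x : γ} (hI : M.Indep I) (hx : x ∈ I) (hxS : x ∈ M.closure S) (hxS' : x ∉ S) :
    ∃ b ∈ S, b ∉ I ∧ M.Indep (insert b (I \ {x})) := by
  by_contra! hcon
  have hJ : M.Indep (I \ {x}) := hI.subset sdiff_subset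
  have hS : S ∩ M.E ⊆ M.closure (I \ {x}) := by
    rintro b ⟨hbS, hbE⟩
    by_cases hbI : b ∈ I
    · exact M.mem_closure_of_mem' ⟨hbI, by rintro rfl; exact hxS' hbS⟩
    · by_contra hb
      exact hcon b hbS hbI ((hJ.insert_indep_iff_of_notMem fun h ↦ hbI h.1).2 ⟨hbE, hb⟩)
  rw [← closure_inter_ground] at hxS
  exact hI.notMem_closure_sdiff_of_mem hx (M.closure_subset_closure_of_subset_closure hS hxS)

lemma Cocircuit.exists_isBase_sdiff_inter_eq_empty {M : Matroid γ} {X : Set γ} {x : γ}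
    (hX : Cocircuit M X) (hx : x ∈ X) : ∃ B, M.IsBase B ∧ x ∈ B ∧ (X \ {x}) ∩ B = ∅ := by
  obtain ⟨B, hB, hdisj⟩ := hX.2.2 (X \ {x}) (sdiff_singleton_ssubset.2 hx)
  obtain ⟨w, hwX, hwB⟩ := hX.2.1 B hB
  obtain rfl | hwx := eq_or_ne w x
  · exact ⟨B, hB, hwB, hdisj⟩
  · exact (eq_empty_iff_forall_notMem.1 hdisj w ⟨⟨hwX, hwx⟩, hwB⟩).elim

lemma Cocircuit.mem_of_forall_isBase_exchange {M : Matroid γ} {X S : Set γ} {x y : γ}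
    (hX : Cocircuit M X) (hx : x ∈ X) (hXS : X ∩ S = ∅)
    (hexch : ∀ B, M.IsBase B → x ∈ B → ∃ z ∈ insert y S, z ∉ B ∧ M.Indep (insert z (B \ {x}))) :
    y ∈ X := by
  obtain ⟨B, hB, hxB, hdisj⟩ := hX.exists_isBase_sdiff_inter_eq_empty hx
  obtain ⟨z, hz, hzB, hind⟩ := hexch B hB hxB
  obtain ⟨w, hwX, hwB'⟩ := hX.2.1 _ (hB.exchange_isBase_of_indep hzB hind)
  rcases hwB' with rfl | ⟨hwB, hwx⟩
  · rcases hz with rfl | hwS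
    · exact hwX
    · exact (eq_empty_iff_forall_notMem.1 hXS w ⟨hwX, hwS⟩).elim
  · exact (eq_empty_iff_forall_notMem.1 hdisj w ⟨⟨hwX, hwx⟩, hwB⟩).elim

section Union

variable {M₁ M₂ N : Matroid γ} {S : Set γ} {x y : γ}

lemma exists_insert_sdiff_indep_of_union
    (hU : ∀ I, N.Indep I ↔ ∃ I₁ I₂, M₁.Indep I₁ ∧ M₂.Indep I₂ ∧ I = I₁ ∪ I₂)
    (hxy : MParallel M₁ x y) (hS : ∀ s ∈ S, ¬ M₁.Indep {s})
    (hxS : x ∈ M₂.closure S) (hyS : y ∈ M₂.closure S) (hxS' : x ∉ S) (hyS' : y ∉ S)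
    {I₁ I₂ : Set γ} (hI₁ : M₁.Indep I₁) (hI₂ : M₂.Indep I₂) (hx : x ∈ I₁ ∪ I₂) :
    ∃ z ∈ insert y S, z ∉ I₁ ∪ I₂ ∧ N.Indep (insert z ((I₁ ∪ I₂) \ {x})) := by
  have hindep {J₁ J₂ J : Set γ} (h₁ : M₁.Indep J₁) (h₂ : M₂.Indep J₂) (hJ : J ⊆ J₁ ∪ J₂) :
      N.Indep J :=
    ((hU _).2 ⟨J₁, J₂, h₁, h₂, rfl⟩).subset hJ
  have hSI₁ : ∀ s ∈ S, s ∉ I₁ := fun s hs h ↦ hS s hs (hI₁.subset (singleton_subset_iff.2 h))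
  by_cases hx₁ : x ∈ I₁
  · have hy₁ := hxy.notMem_of_indep hI₁ hx₁
    have hJ₁ := hxy.indep_insert_sdiff hI₁ hx₁
    by_cases hy₂ : y ∈ I₂
    · obtain ⟨b, hbS, hb₂, hJ₂⟩ := hI₂.exists_insert_sdiff_indep_of_mem_closure hy₂ hyS hyS'
      refine ⟨b, .inr hbS, by simp [hSI₁ b hbS, hb₂], hindep hJ₁ hJ₂ ?_⟩
      intro w
      simp only [mem_insert_iff, mem_union, mem_sdiff, mem_singleton_iff]
      tauto
    · refine ⟨y, mem_insert y S, by simp [hy₁, hy₂], hindep hJ₁ hI₂ ?_⟩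
      intro w
      simp only [mem_insert_iff, mem_union, mem_sdiff, mem_singleton_iff]
      tauto
  · have hx₂ : x ∈ I₂ := hx.resolve_left hx₁
    obtain ⟨b, hbS, hb₂, hJ₂⟩ := hI₂.exists_insert_sdiff_indep_of_mem_closure hx₂ hxS hxS'
    refine ⟨b, .inr hbS, by simp [hSI₁ b hbS, hb₂], hindep hI₁ hJ₂ ?_⟩
    intro w
    simp only [mem_insert_iff, mem_union, mem_sdiff, mem_singleton_iff]
    tauto

lemma Cocircuit.mem_of_mparallel_of_union
    (hU : ∀ I, N.Indep I ↔ ∃ I₁ I₂, M₁.Indep I₁ ∧ M₂.Indep I₂ ∧ I = I₁ ∪ I₂)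
    {X : Set γ} (hX : Cocircuit N X) (hXS : X ∩ S = ∅)
    (hxy : MParallel M₁ x y) (hS : ∀ s ∈ S, ¬ M₁.Indep {s})
    (hxS : x ∈ M₂.closure S) (hyS : y ∈ M₂.closure S) (hxS' : x ∉ S) (hyS' : y ∉ S)
    (hx : x ∈ X) : y ∈ X := by
  refine hX.mem_of_forall_isBase_exchange hx hXS fun B hB hxB ↦ ?_
  obtain ⟨I₁, I₂, hI₁, hI₂, rfl⟩ := (hU B).1 hB.indep
  exact exists_insert_sdiff_indep_of_union hU hxy hS hxS hyS hxS' hyS' hI₁ hI₂ hxB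

end Union

lemma subset_closure_of_restrict_eq_dual {M M₂ : Matroid γ} {R B T : Set γ} (hR : R ⊆ M₂.E)
    (hres : M₂ ↾ R = M✶) (hB : M.IsBase B) (hT : M.E \ B ⊆ M₂.closure T) :
    R ⊆ M₂.closure T := by
  have hbasis : M₂.IsBasis (M.E \ B) R := by
    rw [← isBase_restrict_iff hR, hres]
    exact hB.compl_isBase_dual
  exact hbasis.subset_closure.trans (M₂.closure_subset_closure_of_subset_closure hT)

theorem bz_cocircuit_parallel_general
    (n r : ℕ) (hrn : r ≤ n) (M M₁ M₂ Mhat : Matroid ℕ)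
    (hME : M.E = Set.Icc 1 n) (hMB : M.IsBase (Set.Icc 1 r))
    (hpar1 : ∀ i ∈ Set.Icc 1 r, MParallel M₁ i (n+i))
    (hloop1 : ∀ i ∈ Set.Icc (r+1) n, MLoop M₁ (n+i))
    (hE2 : M₂.E = Set.Icc 1 (2*n)) (hres2 : M₂ ↾ (Set.Icc 1 n) = M✶)
    (hpar2 : ∀ i ∈ Set.Icc (r+1) n, MParallel M₂ i (n+i))
    (hloop2 : ∀ i ∈ Set.Icc 1 r, MLoop M₂ (n+i))
    (hU : ∀ I, Mhat.Indep I ↔ ∃ I₁ I₂, M₁.Indep I₁ ∧ M₂.Indep I₂ ∧ I = I₁ ∪ I₂)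
    (X : Set ℕ) (hX : Cocircuit Mhat X) (hXB : X ∩ Set.Icc (n+r+1) (2*n) = ∅) :
    ∀ i ∈ Set.Icc 1 r, ((n+i) ∈ X ↔ i ∈ X) := by
  intro i hi
  have hBloop : ∀ b ∈ Icc (n+r+1) (2*n), ¬ M₁.Indep {b} := by
    intro b hb
    have hl := hloop1 (b - n) (by simp only [mem_Icc] at hb ⊢; omega)
    rw [Nat.add_sub_cancel' (by simp only [mem_Icc] at hb; omega)] at hl
    exact hl.2
  have hcl : Icc 1 n ⊆ M₂.closure (Icc (n+r+1) (2*n)) := by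
    refine subset_closure_of_restrict_eq_dual (hE2 ▸ Icc_subset_Icc_right (by omega)) hres2 hMB ?_
    rintro j ⟨hjE, hjr⟩
    simp only [hME, mem_Icc] at hjE hjr
    have hj : j ∈ Icc (r+1) n := mem_Icc.2 ⟨by omega, hjE.2⟩
    exact M₂.closure_subset_closure (singleton_subset_iff.2 (mem_Icc.2 (by omega)))
      (hpar2 j hj).symm.mem_closure
  have hiB : i ∈ M₂.closure (Icc (n+r+1) (2*n)) := hcl ⟨hi.1, hi.2.trans hrn⟩
  have hniB : n + i ∈ M₂.closure (Icc (n+r+1) (2*n)) :=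
    ((not_isNonloop_iff (hloop2 i hi).1).1 (mt indep_singleton.2 (hloop2 i hi).2)).mem_closure _
  have hiB' : i ∉ Icc (n+r+1) (2*n) := by simp only [mem_Icc] at hi ⊢; omega
  have hniB' : n + i ∉ Icc (n+r+1) (2*n) := by simp only [mem_Icc] at hi ⊢; omega
  exact ⟨hX.mem_of_mparallel_of_union hU hXB (hpar1 i hi).symm hBloop hniB hiB hniB' hiB',
    hX.mem_of_mparallel_of_union hU hXB (hpar1 i hi) hBloop hiB hniB hiB' hniB'⟩

/-- if `X` is a cocircuit of `M̂` with `X ∩ B = ∅`, then `X`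
contains an element of `A` iff it contains its parallel partner in `{1,…,r}`. -/
theorem bz_cocircuit_parallel
    (n r : ℕ) (hrn : r ≤ n) (M M₁ M₂ Mhat : Matroid ℕ)
    (hME : M.E = Set.Icc 1 n) (hMB : M.IsBase (Set.Icc 1 r))
    (hE1 : M₁.E = Set.Icc 1 (2*n)) (hres1 : M₁ ↾ (Set.Icc 1 n) = M)
    (hpar1 : ∀ i ∈ Set.Icc 1 r, MParallel M₁ i (n+i))
    (hloop1 : ∀ i ∈ Set.Icc (r+1) n, MLoop M₁ (n+i))
    (hE2 : M₂.E = Set.Icc 1 (2*n)) (hres2 : M₂ ↾ (Set.Icc 1 n) = M✶)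
    (hpar2 : ∀ i ∈ Set.Icc (r+1) n, MParallel M₂ i (n+i))
    (hloop2 : ∀ i ∈ Set.Icc 1 r, MLoop M₂ (n+i))
    (hEh : Mhat.E = Set.Icc 1 (2*n))
    (hU : ∀ I, Mhat.Indep I ↔ ∃ I₁ I₂, M₁.Indep I₁ ∧ M₂.Indep I₂ ∧ I = I₁ ∪ I₂)
    (X : Set ℕ) (hX : Cocircuit Mhat X) (hXB : X ∩ Set.Icc (n+r+1) (2*n) = ∅) :
    ∀ i ∈ Set.Icc 1 r, ((n+i) ∈ X ↔ i ∈ X) :=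
  bz_cocircuit_parallel_general n r hrn M M₁ M₂ Mhat hME hMB hpar1 hloop1 hE2 hres2 hpar2 hloop2 hU
    X hX hXB

end NL
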